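/- For every integer p ≥ 1 and every integer n ≥ 0, one has the closed formula C^{(p)}_{n,n} = (−1)^n a^{−n} q^{−2n^2} {n}! Σ_l a^{−2 Σ_{i=1}^{p−1} (p−i) l_i} q^{φ_n(l)} [n choose l], where the sum runs over all multi-indices l = (l_1, …, l_p) of nonnegative integers with l_1 + ⋯ + l_p = n. -/

import Mathlib

open Finset

noncomputable section

/-- The field ℚ(q,a) of rational functions in two indeterminates. -/
abbrev F : Type := FractionRing (MvPolynomial (Fin 2) ℚ)

/-- The indeterminate q. -/
def qv : F := algebraMap (MvPolynomial (Fin 2) ℚ) F (MvPolynomial.X 0)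

/-- The indeterminate a. -/
def av : F := algebraMap (MvPolynomial (Fin 2) ℚ) F (MvPolynomial.X 1)

/-- {n} = q^n - q^{-n}. -/
def qb (n : ℤ) : F := qv ^ n - qv ^ (-n)

/-- {n}_i = {n}{n-1}⋯{n-i+1}. -/
def fall (n : ℤ) (i : ℕ) : F := ∏ j ∈ range i, qb (n - j)

/-- {n}! = {n}_n. -/
def ffact (n : ℕ) : F := fall n n

/-- {n; a} = a q^n - a⁻¹ q^{-n}. -/
def braA (n : ℤ) : F := av * qv ^ n - av⁻¹ * qv ^ (-n)

/-- {n; a}_i = {n;a}{n-1;a}⋯{n-i+1;a}. -/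
def fallA (n : ℤ) (i : ℕ) : F := ∏ j ∈ range i, braA (n - j)

/-- α^i_{m,n} = (-a)^{-i} q^{-i(m+n)+i(i+3)/2} {m}_i {n}_i / {i}!. -/
def alpha (i : ℕ) (m n : ℤ) : F :=
  (-av) ^ (-(i : ℤ)) * qv ^ (-(i : ℤ) * (m + n) + ((i : ℤ) * ((i : ℤ) + 3)) / 2) *
    fall m i * fall n i / ffact i

/-- Partial sum s_i = l_1 + ⋯ + l_i of a multi-index. -/
def psum {p : ℕ} (l : Fin p → ℕ) (i : ℕ) : ℕ :=
  ∑ j ∈ univ.filter (fun j : Fin p => (j : ℕ) < i), l j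

/-- C^{(p)}_{n,k} = Σ_{l_1+⋯+l_p = k} (∏_{i=1}^{p-1} a^{-2 s_i} q^{2 s_i (s_i - 2n + 1)})
    ∏_{i=1}^{p} α^{l_i}_{n-s_{i-1}, n-s_{i-1}}. -/
def Cnk (p n k : ℕ) : F :=
  ∑ l ∈ Finset.Nat.antidiagonalTuple p k,
    (∏ i ∈ range (p - 1),
        av ^ (-(2 : ℤ) * (psum l (i + 1) : ℤ)) *
          qv ^ ((2 : ℤ) * (psum l (i + 1) : ℤ) *
            ((psum l (i + 1) : ℤ) - 2 * (n : ℤ) + 1))) *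
      ∏ i : Fin p,
        alpha (l i) ((n : ℤ) - (psum l (i : ℕ) : ℤ)) ((n : ℤ) - (psum l (i : ℕ) : ℤ))

/-- The Laurent polynomial ring ℤ[q^{±1}, a^{±1}] inside ℚ(q,a). -/
def LaurentZ : Subring F := Subring.closure {qv, av, qv⁻¹, av⁻¹}

/-- The entry l_{i+1} (0-indexed i) of a multi-index, or 0 if out of range. -/
def lget {p : ℕ} (l : Fin p → ℕ) (i : ℕ) : ℕ := if h : i < p then l ⟨i, h⟩ else 0

/-- φ_k(l) = Σ_{i=1}^{p-1} 2 s_i (s_i - 2k + 1) + Σ_{i=1}^{p} l_i(l_i+3)/2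
    + 2 Σ_{i=1}^{p-1} s_i l_{i+1}. -/
def phi (k : ℕ) {p : ℕ} (l : Fin p → ℕ) : ℤ :=
  (∑ i ∈ range (p - 1),
      2 * (psum l (i + 1) : ℤ) * ((psum l (i + 1) : ℤ) - 2 * (k : ℤ) + 1)) +
    (∑ i ∈ range p, ((lget l i : ℤ) * ((lget l i : ℤ) + 3)) / 2) +
    2 * ∑ i ∈ range (p - 1), (psum l (i + 1) : ℤ) * (lget l (i + 1) : ℤ)

/-- [n] = {n}/{1}. -/
def qint (n : ℤ) : F := qb n / qb 1

/-- [n]! = [n][n-1]⋯[1]. -/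
def qfact (n : ℕ) : F := ∏ i ∈ range n, qint ((i : ℤ) + 1)

/-- The q-multinomial coefficient [n choose l] = [n]!/([l_1]!⋯[l_p]!). -/
def qmultinomial {p : ℕ} (n : ℕ) (l : Fin p → ℕ) : F :=
  qfact n / ∏ i : Fin p, qfact (l i)

/-- The balanced Gaussian binomial coefficient [n choose i] = [n]!/([i]![n-i]!). -/
def qbinom (n i : ℕ) : F := qfact n / (qfact i * qfact (n - i))

/-- C̃^{(p)}_{k,k} of formula (17). -/
def Ctilde (p k : ℕ) : F :=
  (-1) ^ k * av ^ (-(k : ℤ)) * qv ^ (-(2 : ℤ) * (k : ℤ) ^ 2) *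
    ∑ l ∈ Finset.Nat.antidiagonalTuple p k,
      av ^ (-(2 : ℤ) *
          ∑ i ∈ range (p - 1), ((p : ℤ) - ((i : ℤ) + 1)) * (lget l i : ℤ)) *
        qv ^ phi k l * qmultinomial k l

/-! Each summand of `C^{(p)}_{n,n}` is matched with the corresponding summand on the right.
With `m_i = n - s_{i-1}` the falling factorials telescope, `∏ {m_i}_{l_i} = {n}_n = {n}!`, so the
`α`'s contribute `{n}!² / ∏ {l_i}!`, and `{k}! = {1}^k [k]!` rewrites this as `{n}! [n choose l]`.
The powers of `a` and `q` then match after two summations by parts,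
`Σ_{i<p} s_i = Σ_{i<p} (p - i) l_i` and `Σ_{i≤p} l_i s_{i-1} = Σ_{i<p} s_i l_{i+1}`. -/

lemma qv_ne_zero : qv ≠ 0 :=
  (map_ne_zero_iff _ (IsFractionRing.injective (MvPolynomial (Fin 2) ℚ) F)).2
    (MvPolynomial.X_ne_zero 0)

lemma av_ne_zero : av ≠ 0 :=
  (map_ne_zero_iff _ (IsFractionRing.injective (MvPolynomial (Fin 2) ℚ) F)).2
    (MvPolynomial.X_ne_zero 1)

lemma qv_pow_ne_one {N : ℕ} (hN : N ≠ 0) : qv ^ N ≠ 1 := by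
  intro h
  rw [qv, ← map_pow, ← map_one (algebraMap (MvPolynomial (Fin 2) ℚ) F),
    (IsFractionRing.injective (MvPolynomial (Fin 2) ℚ) F).eq_iff] at h
  have h2 := congrArg (MvPolynomial.eval fun _ => (2 : ℚ)) h
  simp only [map_pow, MvPolynomial.eval_X, map_one] at h2
  exact absurd h2 (one_lt_pow₀ one_lt_two hN).ne'

lemma qb_ne_zero {m : ℤ} (hm : 0 < m) : qb m ≠ 0 := by
  have hq : qv ^ (2 * m) ≠ 1 := by
    lift m to ℕ using hm.le
    exact_mod_cast qv_pow_ne_one (by omega)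
  rw [qb, sub_ne_zero]
  contrapose! hq
  calc qv ^ (2 * m) = qv ^ (-m) * qv ^ m := by rw [← hq, ← zpow_add₀ qv_ne_zero, two_mul]
    _ = 1 := by rw [← zpow_add₀ qv_ne_zero, neg_add_cancel, zpow_zero]

lemma zpow_sum₀ {G₀ ι : Type*} [CommGroupWithZero G₀] {x : G₀} (hx : x ≠ 0) (s : Finset ι)
    (f : ι → ℤ) : x ^ (∑ i ∈ s, f i) = ∏ i ∈ s, x ^ f i := by
  classical
  induction s using Finset.induction_on with
  | empty => simp
  | insert a s ha ih => rw [sum_insert ha, prod_insert ha, zpow_add₀ hx, ih]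

lemma neg_zpow_neg_natCast {R : Type*} [Field R] (x : R) (n : ℕ) :
    (-x) ^ (-(n : ℤ)) = (-1) ^ n * x ^ (-(n : ℤ)) := by
  rw [zpow_neg, zpow_neg, zpow_natCast, zpow_natCast, neg_pow, mul_inv, ← inv_pow, inv_neg_one]

lemma fall_add (m : ℤ) (b c : ℕ) : fall m (b + c) = fall m b * fall (m - b) c := by
  rw [fall, fall, fall, prod_range_add]
  congr 1
  refine prod_congr rfl fun j _ => ?_
  congr 1; push_cast; ring

lemma prod_fall_partialSums (g : ℕ → ℕ) (m : ℤ) (p : ℕ) :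
    ∏ i ∈ range p, fall (m - (∑ j ∈ range i, g j : ℕ)) (g i) = fall m (∑ j ∈ range p, g j) := by
  induction p with
  | zero => simp [fall]
  | succ p ih => rw [prod_range_succ, sum_range_succ, ih, fall_add]

lemma ffact_eq_qb_one_pow_mul_qfact (n : ℕ) : ffact n = qb 1 ^ n * qfact n := by
  have hrev : ffact n = ∏ j ∈ range n, qb ((j : ℤ) + 1) := by
    rw [ffact, fall, ← prod_range_reflect]
    refine prod_congr rfl fun j hj => ?_
    have := mem_range.1 hj
    congr 1; omega
  have hqb : qb 1 ^ n ≠ 0 := pow_ne_zero n (qb_ne_zero one_pos)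
  rw [hrev, qfact]
  simp only [qint]
  rw [prod_div_distrib, prod_const, card_range, mul_div_cancel₀ _ hqb]

section MultiIndex

variable {p : ℕ} (l : Fin p → ℕ)

@[simp]
lemma lget_coe (i : Fin p) : lget l i = l i := dif_pos i.isLt

@[to_additive]
lemma prod_univ_fin_eq_prod_range_lget {M : Type*} [CommMonoid M] (f : ℕ → ℕ → M) :
    ∏ i : Fin p, f i (l i) = ∏ i ∈ range p, f i (lget l i) := by
  rw [← Fin.prod_univ_eq_prod_range (fun i => f i (lget l i))]
  simp only [lget_coe]

lemma psum_eq_sum_range (i : ℕ) : psum l i = ∑ j ∈ range i, lget l j := by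
  rw [psum, sum_filter, sum_univ_fin_eq_sum_range_lget l (fun j k => if j < i then k else 0),
    ← sum_filter]
  refine sum_subset (fun j hj => ?_) fun j hj hj' => ?_
  · simp only [mem_filter, mem_range] at hj ⊢
    exact hj.2
  · simp only [mem_filter, mem_range, not_and, not_lt] at hj hj'
    simp only [lget, dif_neg (fun h => absurd (hj' h) (by omega))]

end MultiIndex

lemma sum_range_partialSums {R : Type*} [CommRing R] (G : ℕ → R) (p : ℕ) :
    ∑ i ∈ range (p - 1), ∑ j ∈ range (i + 1), G j =
      ∑ i ∈ range (p - 1), ((p : R) - (i + 1)) * G i := by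
  rw [sum_comm' (t' := range (p - 1)) (s' := fun j => Ico j (p - 1))]
  · refine sum_congr rfl fun j hj => ?_
    have := mem_range.1 hj
    rw [sum_const, Nat.card_Ico, nsmul_eq_mul, Nat.cast_sub (by omega), Nat.cast_sub (by omega)]
    push_cast; ring
  · intro i j
    simp only [mem_range, mem_Ico]
    omega

lemma sum_mul_partialSums {R : Type*} [CommRing R] (G : ℕ → R) (p : ℕ) :
    ∑ i ∈ range p, G i * ∑ j ∈ range i, G j =
      ∑ i ∈ range (p - 1), (∑ j ∈ range (i + 1), G j) * G (i + 1) := by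
  cases p with
  | zero => simp
  | succ p =>
    rw [sum_range_succ']
    simp only [range_zero, sum_empty, zero_mul, add_zero, Nat.add_sub_cancel, mul_comm]

lemma sum_neg_two_mul_partialSums (g : ℕ → ℕ) (p : ℕ) :
    ∑ i ∈ range (p - 1), -2 * ((∑ j ∈ range (i + 1), g j : ℕ) : ℤ) =
      -2 * ∑ i ∈ range (p - 1), ((p : ℤ) - (i + 1)) * (g i : ℤ) := by
  rw [← mul_sum, ← sum_range_partialSums]
  push_cast
  rfl

lemma exponent_sum_eq_neg_two_mul_sq_add_phi {p n : ℕ} {l : Fin p → ℕ}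
    (hn : ∑ j ∈ range p, lget l j = n) :
    (∑ i ∈ range (p - 1), 2 * ((∑ j ∈ range (i + 1), lget l j : ℕ) : ℤ) *
        (((∑ j ∈ range (i + 1), lget l j : ℕ) : ℤ) - 2 * n + 1)) +
      ∑ i ∈ range p, (-(lget l i : ℤ) * ((n - (∑ j ∈ range i, lget l j : ℕ)) +
          (n - (∑ j ∈ range i, lget l j : ℕ))) + ((lget l i : ℤ) * ((lget l i : ℤ) + 3)) / 2) =
      -2 * (n : ℤ) ^ 2 + phi n l := by
  have hG : ∑ i ∈ range p, (lget l i : ℤ) = n := by exact_mod_cast hn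
  rw [phi]
  simp only [psum_eq_sum_range]
  push_cast
  rw [← sum_mul_partialSums, mul_sum]
  have hsplit : ∑ i ∈ range p, (-(lget l i : ℤ) * ((n - ∑ j ∈ range i, (lget l j : ℤ)) +
        (n - ∑ j ∈ range i, (lget l j : ℤ))) + ((lget l i : ℤ) * ((lget l i : ℤ) + 3)) / 2) =
      ∑ i ∈ range p, -2 * (n : ℤ) * lget l i +
        ∑ i ∈ range p, 2 * ((lget l i : ℤ) * ∑ j ∈ range i, (lget l j : ℤ)) +
        ∑ i ∈ range p, ((lget l i : ℤ) * ((lget l i : ℤ) + 3)) / 2 := by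
    rw [← sum_add_distrib, ← sum_add_distrib]
    exact sum_congr rfl fun i _ => by ring
  rw [hsplit, ← mul_sum, hG]
  ring

lemma prod_alpha_partialSums {g : ℕ → ℕ} {p n : ℕ} (hg : ∑ j ∈ range p, g j = n) :
    ∏ i ∈ range p, alpha (g i) (n - (∑ j ∈ range i, g j : ℕ)) (n - (∑ j ∈ range i, g j : ℕ)) =
      (-1) ^ n * av ^ (-(n : ℤ)) *
        qv ^ (∑ i ∈ range p, (-(g i : ℤ) * ((n - (∑ j ∈ range i, g j : ℕ)) +
          (n - (∑ j ∈ range i, g j : ℕ))) + ((g i : ℤ) * ((g i : ℤ) + 3)) / 2)) *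
        ffact n * (qfact n / ∏ i ∈ range p, qfact (g i)) := by
  have hsign : ∑ i ∈ range p, -(g i : ℤ) = -n := by
    rw [sum_neg_distrib, ← hg, Nat.cast_sum]
  have hden : ∏ i ∈ range p, ffact (g i) = qb 1 ^ n * ∏ i ∈ range p, qfact (g i) := by
    simp only [ffact_eq_qb_one_pow_mul_qfact]
    rw [prod_mul_distrib, prod_pow_eq_pow_sum, hg]
  simp only [alpha, div_eq_mul_inv, prod_mul_distrib, prod_inv_distrib,
    ← zpow_sum₀ qv_ne_zero, ← zpow_sum₀ (neg_ne_zero.2 av_ne_zero)]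
  rw [prod_fall_partialSums, hg, ← ffact, hsign, neg_zpow_neg_natCast, hden,
    ffact_eq_qb_one_pow_mul_qfact n]
  field_simp

theorem Cnn_closed_formula_general (p n : ℕ) :
    Cnk p n n =
      (-1) ^ n * av ^ (-(n : ℤ)) * qv ^ (-(2 : ℤ) * (n : ℤ) ^ 2) * ffact n *
        ∑ l ∈ Finset.Nat.antidiagonalTuple p n,
          av ^ (-(2 : ℤ) *
              ∑ i ∈ range (p - 1), ((p : ℤ) - ((i : ℤ) + 1)) * (lget l i : ℤ)) *
            qv ^ phi n l * qmultinomial n l := by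
  rw [Cnk, mul_sum]
  refine sum_congr rfl fun l hl => ?_
  have hn : ∑ j ∈ range p, lget l j = n := by
    rw [← sum_univ_fin_eq_sum_range_lget l fun _ k => k]
    exact Finset.Nat.mem_antidiagonalTuple.mp hl
  rw [prod_univ_fin_eq_prod_range_lget l
      fun i k => alpha k ((n : ℤ) - (psum l i : ℤ)) ((n : ℤ) - (psum l i : ℤ)),
    qmultinomial, prod_univ_fin_eq_prod_range_lget l fun _ k => qfact k, prod_mul_distrib,
    ← zpow_sum₀ av_ne_zero, ← zpow_sum₀ qv_ne_zero]
  simp only [psum_eq_sum_range]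
  have hq := congrArg (qv ^ ·) (exponent_sum_eq_neg_two_mul_sq_add_phi hn)
  simp only [zpow_add₀ qv_ne_zero] at hq
  rw [prod_alpha_partialSums hn, sum_neg_two_mul_partialSums,
    eq_div_of_mul_eq (zpow_ne_zero _ qv_ne_zero) hq]
  field_simp [qv_ne_zero]

/-- closed formula for C^{(p)}_{n,n}. -/
theorem Cnn_closed_formula (p n : ℕ) (hp : 1 ≤ p) :
    Cnk p n n =
      (-1) ^ n * av ^ (-(n : ℤ)) * qv ^ (-(2 : ℤ) * (n : ℤ) ^ 2) * ffact n *
        ∑ l ∈ Finset.Nat.antidiagonalTuple p n,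
          av ^ (-(2 : ℤ) *
              ∑ i ∈ range (p - 1), ((p : ℤ) - ((i : ℤ) + 1)) * (lget l i : ℤ)) *
            qv ^ phi n l * qmultinomial n l :=
  Cnn_closed_formula_general p n
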